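/- Let K and L be disjoint finite sets of nonnegative integers with |L| = s, and expand P_L(t) = ∏_{ℓ∈L}(t−ℓ) = Σ_{j=0}^s c_j(L)·C(t,j) in ℝ[t], with bsupp(L) = {j : c_j(L) ≠ 0}. If ℱ ⊆ ⋃_{k∈K} C([n],k) is L-intersecting, then |ℱ| + Σ_{j∈bsupp(L)} |𝒩_j(ℱ)| ≤ Σ_{j∈bsupp(L)} C(n,j). -/

import Mathlib

open Polynomial

/-- The binomial polynomial `C(t,j)` over `ℝ`. -/
noncomputable def binomPolyR (j : ℕ) : Polynomial ℝ :=
  Polynomial.C ((j.factorial : ℝ))⁻¹ * descPochhammer ℝ j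

/-- The `j`-non-shadow of a family `ℱ`. -/
def nonShadow (n j : ℕ) (ℱ : Finset (Finset (Fin n))) : Finset (Finset (Fin n)) :=
  (Finset.powersetCard j (Finset.univ : Finset (Fin n))).filter
    (fun T => ∀ F ∈ ℱ, ¬ T ⊆ F)

/-!
Work in the space of real functions on subsets `x ⊆ [n]`. Each `A ∈ ℱ` gives
`f_A(x) = P_L(|A ∩ x|)` and each non-shadow set `T` gives the indicator `e_T(x) = [T ⊆ x]`.
Since `C(|A ∩ x|, j) = Σ_{T ⊆ A, |T| = j} e_T(x)`, the expansion of `P_L` in the binomial basis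
puts every `f_A` in the span of the `e_T` with `|T| ∈ bsupp(L)`, a space of dimension at most
`Σ_{j ∈ bsupp(L)} C(n,j)`. The `f_A` and `e_T` are linearly independent by triangularity:
at `x = A ∈ ℱ` everything but `f_A` vanishes (`P_L` kills `L`, non-shadow sets lie in no member
of `ℱ`), `f_A(A) = P_L(|A|) ≠ 0` as `K ∩ L = ∅`, and the `e_T` are unitriangular for
inclusion.
-/

open Finset

lemma binomPolyR_eval_natCast (j m : ℕ) : (binomPolyR j).eval (m : ℝ) = m.choose j := by
  have hj : (j.factorial : ℝ) ≠ 0 := Nat.cast_ne_zero.2 j.factorial_ne_zero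
  rw [binomPolyR, eval_mul, eval_C, descPochhammer_eval_eq_descFactorial,
    Nat.descFactorial_eq_factorial_mul_choose]
  push_cast
  field_simp

lemma eval_prod_X_sub_C_natCast_eq_zero_iff (L : Finset ℕ) (m : ℕ) :
    (∏ ℓ ∈ L, (X - C (ℓ : ℝ))).eval (m : ℝ) = 0 ↔ m ∈ L := by
  simp [eval_prod, prod_eq_zero_iff, sub_eq_zero]

theorem linearIndependent_of_eval_triangular {K ι X : Type*} [Field K] (v : ι → X → K)
    (p : ι → X) (μ : ι → ℕ) (hdiag : ∀ i, v i (p i) ≠ 0)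
    (htri : ∀ i j, j ≠ i → v j (p i) ≠ 0 → μ j < μ i) :
    LinearIndependent K v := by
  classical
  rw [linearIndependent_iff']
  intro t g hg i
  induction hμ : μ i using Nat.strong_induction_on generalizing i with
  | _ m ih =>
    intro hi
    have hsum : ∑ j ∈ t, g j * v j (p i) = 0 := by
      simpa [Finset.sum_apply] using congrFun hg (p i)
    rw [sum_eq_single_of_mem i hi] at hsum
    · exact (mul_eq_zero.1 hsum).resolve_right (hdiag i)
    intro j hj hji
    by_cases hv : v j (p i) = 0
    · rw [hv, mul_zero]
    · rw [ih (μ j) (hμ ▸ htri i j hji hv) j rfl hj, zero_mul]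

theorem card_le_card_of_linearIndependent_of_mem_span {K M ι : Type*} [Field K]
    [AddCommGroup M] [Module K M] {I : Finset ι} {v : ι → M}
    (hv : LinearIndependent K (fun i : I => v i)) (D : Finset M)
    (hspan : ∀ i ∈ I, v i ∈ Submodule.span K (D : Set M)) : #I ≤ #D := by
  have hw : LinearIndependent K
      (fun i : I => (⟨v i, hspan i i.2⟩ : Submodule.span K (D : Set M))) :=
    LinearIndependent.of_comp (Submodule.subtype _) hv
  calc #I = Fintype.card I := (Fintype.card_coe I).symm
    _ ≤ Module.finrank K (Submodule.span K (D : Set M)) := hw.fintype_card_le_finrank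
    _ ≤ #D := finrank_span_finset_le_card D

lemma card_filter_card_mem {α : Type*} [Fintype α] (S : Finset ℕ) :
    #(univ.filter fun T : Finset α => #T ∈ S) = ∑ j ∈ S, (Fintype.card α).choose j := by
  rw [card_eq_sum_card_fiberwise (f := card) (s := univ.filter fun T : Finset α => #T ∈ S)
    (t := S) fun T hT => (mem_filter.1 hT).2]
  refine sum_congr rfl fun j hj => ?_
  rw [← card_univ, ← card_powersetCard]
  congr 1
  ext T
  simp only [mem_filter, mem_univ, true_and, mem_powersetCard, subset_univ]
  constructor
  · exact fun h => h.2
  · rintro rfl; exact ⟨hj, rfl⟩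

section SubsetIndicator

variable {α : Type*} [DecidableEq α]

def subsetIndicator (T x : Finset α) : ℝ := if T ⊆ x then 1 else 0

noncomputable def levelIndicators [Fintype α] (S : Finset ℕ) : Finset (Finset α → ℝ) :=
  (univ.filter fun T : Finset α => #T ∈ S).image subsetIndicator

lemma subsetIndicator_mem_levelIndicators [Fintype α] {S : Finset ℕ} {T : Finset α}
    (hT : #T ∈ S) : subsetIndicator T ∈ levelIndicators S :=
  mem_image_of_mem _ (mem_filter.2 ⟨mem_univ T, hT⟩)

lemma card_levelIndicators_le [Fintype α] (S : Finset ℕ) :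
    #(levelIndicators (α := α) S) ≤ ∑ j ∈ S, (Fintype.card α).choose j :=
  card_filter_card_mem (α := α) S ▸ card_image_le

lemma sum_powersetCard_subsetIndicator (A x : Finset α) (j : ℕ) :
    ∑ T ∈ powersetCard j A, subsetIndicator T x = (#(A ∩ x)).choose j := by
  have hfilter : (powersetCard j A).filter (· ⊆ x) = powersetCard j (A ∩ x) := by
    ext T
    simp only [mem_filter, mem_powersetCard, subset_inter_iff]
    tauto
  simp only [subsetIndicator]
  rw [sum_boole, hfilter, card_powersetCard]

lemma eval_card_inter_mem_span [Fintype α] {R : Finset ℕ} {c : ℕ → ℝ} {P : ℝ[X]}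
    (hP : P = ∑ j ∈ R, c j • binomPolyR j) (A : Finset α) :
    (fun x => P.eval (#(A ∩ x) : ℝ)) ∈ Submodule.span ℝ
      (levelIndicators (α := α) (R.filter (c · ≠ 0)) : Set (Finset α → ℝ)) := by
  have hexp : (fun x => P.eval (#(A ∩ x) : ℝ)) =
      ∑ j ∈ R.filter (c · ≠ 0), c j • ∑ T ∈ powersetCard j A, subsetIndicator T := by
    funext x
    simp only [hP, eval_finsetSum, eval_smul, binomPolyR_eval_natCast, smul_eq_mul,
      Finset.sum_apply, Pi.smul_apply, sum_powersetCard_subsetIndicator]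
    rw [sum_filter_of_ne]
    intro j _ hj hcj
    exact hj (by rw [hcj, zero_mul])
  rw [hexp]
  refine Submodule.sum_mem _ fun j hj => Submodule.smul_mem _ _ <|
    Submodule.sum_mem _ fun T hT => Submodule.subset_span ?_
  exact subsetIndicator_mem_levelIndicators ((mem_powersetCard.1 hT).2 ▸ hj)

def polySubsetFamily (P : ℝ[X]) (ℱ : Finset (Finset α)) (A : Finset α) : Finset α → ℝ :=
  if A ∈ ℱ then fun x => P.eval (#(A ∩ x) : ℝ) else subsetIndicator A

lemma polySubsetFamily_mem_span [Fintype α] {R : Finset ℕ} {c : ℕ → ℝ} {P : ℝ[X]}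
    (hP : P = ∑ j ∈ R, c j • binomPolyR j) {ℱ N : Finset (Finset α)}
    (hN : ∀ T ∈ N, #T ∈ R.filter (c · ≠ 0)) :
    ∀ A ∈ ℱ ∪ N, polySubsetFamily P ℱ A ∈ Submodule.span ℝ
      (levelIndicators (α := α) (R.filter (c · ≠ 0)) : Set (Finset α → ℝ)) := by
  intro A hA
  unfold polySubsetFamily
  split_ifs with hAℱ
  · exact eval_card_inter_mem_span hP A
  · exact Submodule.subset_span
      (subsetIndicator_mem_levelIndicators (hN A ((mem_union.1 hA).resolve_left hAℱ)))

theorem linearIndependent_polySubsetFamily {P : ℝ[X]} {ℱ N : Finset (Finset α)}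
    (hoff : ∀ A ∈ ℱ, ∀ B ∈ ℱ, A ≠ B → P.eval (#(A ∩ B) : ℝ) = 0)
    (hdiag : ∀ A ∈ ℱ, P.eval (#A : ℝ) ≠ 0) (hN : ∀ T ∈ N, ∀ F ∈ ℱ, ¬ T ⊆ F) :
    LinearIndependent ℝ (fun A : ↥(ℱ ∪ N) => polySubsetFamily P ℱ A) := by
  refine linearIndependent_of_eval_triangular _ (fun A => A)
    (fun A => if (A : Finset α) ∈ ℱ then 0 else #(A : Finset α) + 1) ?_ ?_
  · rintro ⟨A, -⟩
    by_cases hAℱ : A ∈ ℱ <;> simp [polySubsetFamily, subsetIndicator, hAℱ, hdiag]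
  · rintro ⟨A, hA⟩ ⟨B, hB⟩ hne hv
    have hBA : B ≠ A := fun h => hne (Subtype.ext h)
    simp only [polySubsetFamily] at hv ⊢
    by_cases hAℱ : A ∈ ℱ <;> by_cases hBℱ : B ∈ ℱ <;>
      simp only [hAℱ, hBℱ, if_true, if_false] at hv ⊢
    · exact absurd (hoff B hBℱ A hAℱ hBA) hv
    · have hBN : B ∈ N := (mem_union.1 hB).resolve_left hBℱ
      exact absurd (if_neg (hN B hBN A hAℱ)) hv
    · omega
    · have hBsub : B ⊆ A := by by_contra h; exact hv (if_neg h)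
      have := card_lt_card (lt_of_le_of_ne hBsub hBA)
      omega

end SubsetIndicator

lemma mem_nonShadow {n j : ℕ} {ℱ : Finset (Finset (Fin n))} {T : Finset (Fin n)} :
    T ∈ nonShadow n j ℱ ↔ #T = j ∧ ∀ F ∈ ℱ, ¬ T ⊆ F := by
  simp [nonShadow]

lemma mem_biUnion_nonShadow {n : ℕ} {ℱ : Finset (Finset (Fin n))} {S : Finset ℕ}
    {T : Finset (Fin n)} :
    T ∈ S.biUnion (nonShadow n · ℱ) ↔ #T ∈ S ∧ ∀ F ∈ ℱ, ¬ T ⊆ F := by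
  simp only [mem_biUnion, mem_nonShadow]
  constructor
  · rintro ⟨j, hj, rfl, hT⟩
    exact ⟨hj, hT⟩
  · rintro ⟨hT, hTℱ⟩
    exact ⟨#T, hT, rfl, hTℱ⟩

lemma card_union_biUnion_nonShadow {n : ℕ} (ℱ : Finset (Finset (Fin n))) (S : Finset ℕ) :
    #(ℱ ∪ S.biUnion (nonShadow n · ℱ)) = #ℱ + ∑ j ∈ S, #(nonShadow n j ℱ) := by
  rw [card_union_of_disjoint, card_biUnion]
  · intro j _ j' _ hjj'
    exact disjoint_left.2 fun T hT hT' =>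
      hjj' ((mem_nonShadow.1 hT).1.symm.trans (mem_nonShadow.1 hT').1)
  · exact disjoint_left.2 fun F hF hFN => (mem_biUnion_nonShadow.1 hFN).2 F hF subset_rfl

theorem stmt19_general (n s : ℕ) (K L : Finset ℕ) (hdisj : Disjoint K L)
    (c : ℕ → ℝ)
    (hc : ∏ ℓ ∈ L, (X - Polynomial.C (ℓ : ℝ)) =
      ∑ j ∈ Finset.range (s + 1), c j • binomPolyR j)
    (ℱ : Finset (Finset (Fin n)))
    (hℱK : ∀ F ∈ ℱ, F.card ∈ K)
    (hint : ∀ A ∈ ℱ, ∀ B ∈ ℱ, A ≠ B → (A ∩ B).card ∈ L) :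
    ℱ.card + ∑ j ∈ (Finset.range (s + 1)).filter (fun j => c j ≠ 0),
        (nonShadow n j ℱ).card
      ≤ ∑ j ∈ (Finset.range (s + 1)).filter (fun j => c j ≠ 0), n.choose j := by
  classical
  set S := (range (s + 1)).filter (fun j => c j ≠ 0)
  set N := S.biUnion (nonShadow n · ℱ)
  have hevalP := eval_prod_X_sub_C_natCast_eq_zero_iff L
  have hind : LinearIndependent ℝ
      (fun A : ↥(ℱ ∪ N) => polySubsetFamily (∏ ℓ ∈ L, (X - C (ℓ : ℝ))) ℱ A) :=
    linearIndependent_polySubsetFamily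
      (fun A hA B hB hAB => (hevalP _).2 (hint A hA B hB hAB))
      (fun A hA h => disjoint_left.1 hdisj (hℱK A hA) ((hevalP _).1 h))
      (fun T hT => (mem_biUnion_nonShadow.1 hT).2)
  calc #ℱ + ∑ j ∈ S, #(nonShadow n j ℱ)
      = #(ℱ ∪ N) := (card_union_biUnion_nonShadow ℱ S).symm
    _ ≤ #(levelIndicators (α := Fin n) S) :=
      card_le_card_of_linearIndependent_of_mem_span hind _
        (polySubsetFamily_mem_span hc fun T hT => (mem_biUnion_nonShadow.1 hT).1)
    _ ≤ ∑ j ∈ S, n.choose j := by simpa using card_levelIndicators_le (α := Fin n) S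

/-- Nonmodular support-sensitive analogue: for disjoint `K, L ⊆ ℤ_{≥0}` and an
`L`-intersecting family with sizes in `K`,
`|ℱ| + Σ_{j∈bsupp(L)} |𝒩_j(ℱ)| ≤ Σ_{j∈bsupp(L)} C(n,j)`. -/
theorem stmt19 (n s : ℕ) (K L : Finset ℕ) (hdisj : Disjoint K L) (hLcard : L.card = s)
    (c : ℕ → ℝ)
    (hc : ∏ ℓ ∈ L, (X - Polynomial.C (ℓ : ℝ)) =
      ∑ j ∈ Finset.range (s + 1), c j • binomPolyR j)
    (ℱ : Finset (Finset (Fin n)))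
    (hℱK : ∀ F ∈ ℱ, F.card ∈ K)
    (hint : ∀ A ∈ ℱ, ∀ B ∈ ℱ, A ≠ B → (A ∩ B).card ∈ L) :
    ℱ.card + ∑ j ∈ (Finset.range (s + 1)).filter (fun j => c j ≠ 0),
        (nonShadow n j ℱ).card
      ≤ ∑ j ∈ (Finset.range (s + 1)).filter (fun j => c j ≠ 0), n.choose j :=
  stmt19_general n s K L hdisj c hc ℱ hℱK hint
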